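/- arXiv:2412.04179 — 5 statements merged into one kernel-verified Lean document; each statement's English description precedes it below -/
import Mathlib

section
/- Let n, L ≥ 1, let A ∈ ℝ^{n×n×L×L} be a nonnegative tensor, let α, β > 1, and let x ∈ ℝ^n, c ∈ ℝ^L be entrywise positive. Then for every index m, |Σ_{i=1}^n (∂²f_{α,β}/∂x_i ∂x_m)(x,c) · x_i| ≤ |α − 1| · (∂f_{α,β}/∂x_m)(x,c). -/
/-!
The node factor `(x_i^α + x_j^α)^(1/α)` is positively homogeneous of degree one, hence so is
`f = mlObjective` in `x`, and `∂f/∂x_m` is homogeneous of degree zero. Euler's identity for the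
smooth function `∂f/∂x_m` then makes `∑ i, ∂²f/∂x_i∂x_m · x_i` vanish, and the right-hand side is
nonnegative because `f` is monotone in each `x_m` when `A ≥ 0` and `c > 0`.
-/

open Finset Function

/-- The multilayer core-periphery objective. -/
noncomputable def mlObjective {n L : ℕ} (A : Fin n → Fin n → Fin L → Fin L → ℝ)
    (α β : ℝ) (x : Fin n → ℝ) (c : Fin L → ℝ) : ℝ :=
  ∑ i, ∑ j, ∑ k, ∑ l,
    A i j k l * (x i ^ α + x j ^ α) ^ (1 / α) * (c k ^ β + c l ^ β) ^ (1 / β)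

/-- The partial derivative `∂f/∂x_m` of the objective with respect to node coreness. -/
noncomputable def partialX {n L : ℕ} (A : Fin n → Fin n → Fin L → Fin L → ℝ)
    (α β : ℝ) (m : Fin n) (x : Fin n → ℝ) (c : Fin L → ℝ) : ℝ :=
  deriv (fun t => mlObjective A α β (Function.update x m t) c) (x m)

open Filter Topology

section Calculus

variable {𝕜 ι : Type*} [NontriviallyNormedField 𝕜] [Fintype ι]
  {F : (ι → 𝕜) → 𝕜} {F' : (ι → 𝕜) →L[𝕜] 𝕜} {x : ι → 𝕜}

theorem HasFDerivAt.hasDerivAt_update [DecidableEq ι] (hF : HasFDerivAt F F' x) (i : ι) :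
    HasDerivAt (fun t => F (update x i t)) (F' (Pi.single i 1)) (x i) := by
  have hF' : HasFDerivAt F F' (update x i (x i)) := by rwa [update_eq_self]
  exact hF'.comp_hasDerivAt (x i) (_root_.hasDerivAt_update x i (x i))

theorem ContinuousLinearMap.sum_apply_single_mul [DecidableEq ι] (F' : (ι → 𝕜) →L[𝕜] 𝕜)
    (x : ι → 𝕜) :
    ∑ i, F' (Pi.single i 1) * x i = F' x := by
  conv_rhs => rw [pi_eq_sum_univ' x, map_sum]
  simp [mul_comm]

theorem HasFDerivAt.apply_self_eq_zero_of_eventually_smul_eq (hF : HasFDerivAt F F' x)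
    (hhom : ∀ᶠ s in 𝓝 (1 : 𝕜), F (s • x) = F x) : F' x = 0 := by
  have hcomp : HasDerivAt (fun s : 𝕜 => F (s • x)) (F' x) 1 := by
    have hF' : HasFDerivAt F F' ((1 : 𝕜) • x) := by rwa [one_smul]
    refine (hF'.comp_hasDerivAt (1 : 𝕜) ((hasDerivAt_id' (1 : 𝕜)).smul_const x)).congr_deriv ?_
    simp
  exact hcomp.unique ((hasDerivAt_const (1 : 𝕜) (F x)).congr_of_eventuallyEq hhom)

end Calculus

theorem Real.rpow_add_rpow_rpow_one_div_mul {p s a b : ℝ} (hp : p ≠ 0) (hs : 0 ≤ s)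
    (ha : 0 ≤ a) (hb : 0 ≤ b) :
    ((s * a) ^ p + (s * b) ^ p) ^ (1 / p) = s * (a ^ p + b ^ p) ^ (1 / p) := by
  rw [Real.mul_rpow hs ha, Real.mul_rpow hs hb, ← mul_add,
    Real.mul_rpow (Real.rpow_nonneg hs p) (by positivity), ← Real.rpow_mul hs,
    mul_one_div_cancel hp, Real.rpow_one]

section Objective

variable {n L : ℕ} (A : Fin n → Fin n → Fin L → Fin L → ℝ) (α β : ℝ) (c : Fin L → ℝ)

theorem mlObjective_smul (hα : α ≠ 0) {x : Fin n → ℝ} (hx : 0 ≤ x) {s : ℝ} (hs : 0 ≤ s) :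
    mlObjective A α β (s • x) c = s * mlObjective A α β x c := by
  simp only [mlObjective, Finset.mul_sum, Pi.smul_apply, smul_eq_mul,
    Real.rpow_add_rpow_rpow_one_div_mul hα hs (hx _) (hx _)]
  exact Fintype.sum_congr _ _ fun i => Fintype.sum_congr _ _ fun j =>
    Fintype.sum_congr _ _ fun k => Fintype.sum_congr _ _ fun l => by ring

theorem mlObjective_mono (hA : ∀ i j k l, 0 ≤ A i j k l) (hc : 0 ≤ c) (hα : 0 < α)
    {x y : Fin n → ℝ} (hx : 0 ≤ x) (hxy : x ≤ y) :
    mlObjective A α β x c ≤ mlObjective A α β y c := by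
  unfold mlObjective
  refine sum_le_sum fun i _ => sum_le_sum fun j _ => sum_le_sum fun k _ => sum_le_sum fun l _ => ?_
  have hmean : (x i ^ α + x j ^ α) ^ (1 / α) ≤ (y i ^ α + y j ^ α) ^ (1 / α) :=
    Real.rpow_le_rpow (add_nonneg (Real.rpow_nonneg (hx i) α) (Real.rpow_nonneg (hx j) α))
      (add_le_add (Real.rpow_le_rpow (hx i) (hxy i) hα.le) (Real.rpow_le_rpow (hx j) (hxy j) hα.le))
      (one_div_nonneg.2 hα.le)
  have hlayer : 0 ≤ (c k ^ β + c l ^ β) ^ (1 / β) :=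
    Real.rpow_nonneg (add_nonneg (Real.rpow_nonneg (hc k) β) (Real.rpow_nonneg (hc l) β)) _
  exact mul_le_mul_of_nonneg_right (mul_le_mul_of_nonneg_left hmean (hA i j k l)) hlayer

theorem contDiffAt_mlObjective {x : Fin n → ℝ} (hx : ∀ i, 0 < x i) (k : WithTop ℕ∞) :
    ContDiffAt ℝ k (fun y => mlObjective A α β y c) x := by
  unfold mlObjective
  refine ContDiffAt.sum fun i _ => ContDiffAt.sum fun j _ => ContDiffAt.sum fun k _ =>
    ContDiffAt.sum fun l _ => (contDiffAt_const.mul (ContDiffAt.rpow_const_of_ne ?_ ?_)).mul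
      contDiffAt_const
  · exact ((contDiff_apply ℝ ℝ i).contDiffAt.rpow_const_of_ne (hx i).ne').add
      ((contDiff_apply ℝ ℝ j).contDiffAt.rpow_const_of_ne (hx j).ne')
  · have := hx i; have := hx j; positivity

end Objective

section PartialX

variable {n L : ℕ} (A : Fin n → Fin n → Fin L → Fin L → ℝ) (α β : ℝ) (m : Fin n)
  (c : Fin L → ℝ) {x : Fin n → ℝ}

theorem partialX_eq_fderiv (hx : ∀ i, 0 < x i) :
    partialX A α β m x c = fderiv ℝ (fun y => mlObjective A α β y c) x (Pi.single m 1) :=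
  ((contDiffAt_mlObjective A α β c hx 1).differentiableAt one_ne_zero).hasFDerivAt
    |>.hasDerivAt_update m |>.deriv

theorem contDiffAt_partialX (hx : ∀ i, 0 < x i) (k : WithTop ℕ∞) :
    ContDiffAt ℝ k (fun y => partialX A α β m y c) x := by
  have hpos : ∀ᶠ y in 𝓝 x, ∀ i, 0 < y i :=
    eventually_all.2 fun i => (continuous_apply i).continuousAt.eventually (lt_mem_nhds (hx i))
  refine ContDiffAt.congr_of_eventuallyEq ?_ (hpos.mono fun y hy => partialX_eq_fderiv A α β m c hy)
  exact ((contDiffAt_mlObjective A α β c hx (k + 1)).fderiv_right le_rfl).clm_apply contDiffAt_const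

theorem partialX_smul (hα : α ≠ 0) (hx : ∀ i, 0 < x i) {s : ℝ} (hs : 0 < s) :
    partialX A α β m (s • x) c = partialX A α β m x c := by
  set G := fun t => mlObjective A α β (update x m t) c
  have hG : (fun t => mlObjective A α β (update (s • x) m t) c) =ᶠ[𝓝 ((s • x) m)]
      fun t => s * G (s⁻¹ * t) := by
    filter_upwards [lt_mem_nhds (by simpa using mul_pos hs (hx m))] with t ht
    have hupd : update (s • x) m t = s • update x m (s⁻¹ * t) := by
      rw [← update_smul, smul_eq_mul, mul_inv_cancel_left₀ hs.ne']
    rw [hupd, mlObjective_smul A α β c hα (le_update_iff.2 ⟨by positivity, fun j _ => (hx j).le⟩)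
      hs.le]
  rw [partialX, hG.deriv_eq, deriv_const_mul_field, deriv_comp_mul_left, smul_eq_mul,
    Pi.smul_apply, smul_eq_mul, inv_mul_cancel_left₀ hs.ne', mul_inv_cancel_left₀ hs.ne',
    partialX]

theorem partialX_nonneg (hA : ∀ i j k l, 0 ≤ A i j k l) (hc : 0 ≤ c) (hα : 0 < α)
    (hx : ∀ i, 0 < x i) : 0 ≤ partialX A α β m x c := by
  have hmono : MonotoneOn (fun t => mlObjective A α β (update x m t) c) (Set.Ioi 0) :=
    fun t ht u _ htu => mlObjective_mono A α β c hA hc hα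
      (le_update_iff.2 ⟨le_of_lt ht, fun j _ => (hx j).le⟩) (update_le_update_iff'.2 htu)
  exact hmono.derivWithin_nonneg.trans_eq (derivWithin_of_mem_nhds (Ioi_mem_nhds (hx m)))

end PartialX

theorem second_partial_xx_bound_general {n L : ℕ}
    (A : Fin n → Fin n → Fin L → Fin L → ℝ) (hA : ∀ i j k l, 0 ≤ A i j k l)
    (α β : ℝ) (hα : 1 < α)
    (x : Fin n → ℝ) (c : Fin L → ℝ) (hx : ∀ i, 0 < x i) (hc : ∀ k, 0 < c k) :
    ∀ m : Fin n,
      |∑ i, deriv (fun t => partialX A α β m (Function.update x i t) c) (x i) * x i| ≤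
        |α - 1| * partialX A α β m x c := by
  intro m
  have hP := ((contDiffAt_partialX A α β m c hx 1).differentiableAt one_ne_zero).hasFDerivAt
  have hEuler : ∑ i, deriv (fun t => partialX A α β m (update x i t) c) (x i) * x i = 0 := by
    simp only [(hP.hasDerivAt_update _).deriv, ContinuousLinearMap.sum_apply_single_mul]
    refine hP.apply_self_eq_zero_of_eventually_smul_eq ?_
    filter_upwards [lt_mem_nhds one_pos] with s hs
    exact partialX_smul A α β m c (by linarith) hx hs
  rw [hEuler, abs_zero]
  exact mul_nonneg (abs_nonneg _)
    (partialX_nonneg A α β m c hA (fun k => (hc k).le) (by linarith) hx)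

theorem second_partial_xx_bound {n L : ℕ} (hn : 1 ≤ n) (hL : 1 ≤ L)
    (A : Fin n → Fin n → Fin L → Fin L → ℝ) (hA : ∀ i j k l, 0 ≤ A i j k l)
    (α β : ℝ) (hα : 1 < α) (hβ : 1 < β)
    (x : Fin n → ℝ) (c : Fin L → ℝ) (hx : ∀ i, 0 < x i) (hc : ∀ k, 0 < c k) :
    ∀ m : Fin n,
      |∑ i, deriv (fun t => partialX A α β m (Function.update x i t) c) (x i) * x i| ≤
        |α - 1| * partialX A α β m x c :=
  second_partial_xx_bound_general A hA α β hα x c hx hc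
end

section
/- Let n, L ≥ 1, let A ∈ ℝ^{n×n×L×L} be a nonnegative tensor, let α, β > 1, and let x ∈ ℝ^n, c ∈ ℝ^L be entrywise positive. Then for every index m, |Σ_{p=1}^L (∂²f_{α,β}/∂c_p ∂x_m)(x,c) · c_p| ≤ 2 · (∂f_{α,β}/∂x_m)(x,c). -/
/-!
As a function of `c`, `∂f/∂x_m` is a nonnegative combination of the two-point `β`-norms
`(c_k^β + c_l^β)^(1/β)`, each positively homogeneous of degree one. Euler's identity therefore
gives `∑_p ∂²f/∂c_p∂x_m · c_p = ∂f/∂x_m`, and this is nonnegative, so its absolute value is at most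
`2 · ∂f/∂x_m`.
-/

open Finset Function

section PairNorm

variable {ι : Type*} (p : ℝ)

noncomputable def pairNormSum [Fintype ι] (W : ι → ι → ℝ) (y : ι → ℝ) : ℝ :=
  ∑ i, ∑ j, W i j * (y i ^ p + y j ^ p) ^ (1 / p)

variable {p} in
theorem pairNormSum_nonneg [Fintype ι] {W : ι → ι → ℝ} (hW : ∀ i j, 0 ≤ W i j) {y : ι → ℝ}
    (hy : ∀ i, 0 ≤ y i) : 0 ≤ pairNormSum p W y :=
  sum_nonneg fun i _ => sum_nonneg fun j _ =>
    mul_nonneg (hW i j) (Real.rpow_nonneg (by have := hy i; have := hy j; positivity) _)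

variable [DecidableEq ι]

noncomputable def pairNormPartial (y : ι → ℝ) (m i j : ι) : ℝ :=
  (y i ^ p + y j ^ p) ^ (1 / p - 1) *
    (y i ^ (p - 1) * (Pi.single m 1 : ι → ℝ) i + y j ^ (p - 1) * (Pi.single m 1 : ι → ℝ) j)

variable {p}

theorem hasDerivAt_rpow_update {y : ι → ℝ} (hy : ∀ i, 0 < y i) (m i : ι) :
    HasDerivAt (fun t => update y m t i ^ p)
      (p * y i ^ (p - 1) * (Pi.single m 1 : ι → ℝ) i) (y m) := by
  have h := (hasDerivAt_pi.mp (hasDerivAt_update y m (y m)) i).rpow_const (p := p)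
    (Or.inl (by simpa using (hy i).ne'))
  simpa [mul_comm, mul_left_comm, mul_assoc] using h

theorem hasDerivAt_pairNorm_update (hp : p ≠ 0) {y : ι → ℝ} (hy : ∀ i, 0 < y i) (m i j : ι) :
    HasDerivAt (fun t => (update y m t i ^ p + update y m t j ^ p) ^ (1 / p))
      (pairNormPartial p y m i j) (y m) := by
  have hS : y i ^ p + y j ^ p ≠ 0 := by have := hy i; have := hy j; positivity
  convert ((hasDerivAt_rpow_update hy m i).add (hasDerivAt_rpow_update hy m j)).rpow_const
    (p := 1 / p) (Or.inl (by simpa using hS)) using 1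
  · rfl
  simp only [pairNormPartial, Pi.add_apply, update_eq_self]
  field_simp

theorem sum_pairNormPartial_mul_self [Fintype ι] {y : ι → ℝ} (hy : ∀ i, 0 < y i) (i j : ι) :
    ∑ m, pairNormPartial p y m i j * y m = (y i ^ p + y j ^ p) ^ (1 / p) := by
  have hS : 0 < y i ^ p + y j ^ p := by have := hy i; have := hy j; positivity
  have hcoord : ∀ k, ∑ m, y k ^ (p - 1) * (Pi.single m 1 : ι → ℝ) k * y m = y k ^ p := by
    intro k
    simp only [Pi.single_apply, mul_ite, mul_one, mul_zero, ite_mul, zero_mul, sum_ite_eq, mem_univ,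
      ↓reduceIte]
    rw [← Real.rpow_add_one (hy k).ne', sub_add_cancel]
  calc ∑ m, pairNormPartial p y m i j * y m
      = (y i ^ p + y j ^ p) ^ (1 / p - 1) * (y i ^ p + y j ^ p) := by
        simp only [pairNormPartial, mul_assoc, ← mul_sum, ← hcoord i, ← hcoord j, add_mul,
          sum_add_distrib]
    _ = (y i ^ p + y j ^ p) ^ (1 / p) := by
        rw [← Real.rpow_add_one hS.ne', sub_add_cancel]

theorem pairNormPartial_nonneg {y : ι → ℝ} (hy : ∀ i, 0 ≤ y i) (m i j : ι) :
    0 ≤ pairNormPartial p y m i j := by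
  have hsingle : ∀ k, 0 ≤ (Pi.single m 1 : ι → ℝ) k :=
    (Pi.single_nonneg.mpr zero_le_one : (0 : ι → ℝ) ≤ Pi.single m 1)
  have := hy i; have := hy j; have := hsingle i; have := hsingle j
  unfold pairNormPartial
  positivity

variable [Fintype ι]

theorem hasDerivAt_pairNormSum_update (hp : p ≠ 0) (W : ι → ι → ℝ) {y : ι → ℝ}
    (hy : ∀ i, 0 < y i) (m : ι) :
    HasDerivAt (fun t => pairNormSum p W (update y m t))
      (∑ i, ∑ j, W i j * pairNormPartial p y m i j) (y m) :=
  .fun_sum fun i _ => .fun_sum fun j _ => (hasDerivAt_pairNorm_update hp hy m i j).const_mul _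

theorem sum_deriv_pairNormSum_update_mul (hp : p ≠ 0) (W : ι → ι → ℝ) {y : ι → ℝ}
    (hy : ∀ i, 0 < y i) :
    ∑ m, deriv (fun t => pairNormSum p W (update y m t)) (y m) * y m = pairNormSum p W y := by
  simp only [(hasDerivAt_pairNormSum_update hp W hy _).deriv, sum_mul, mul_assoc]
  rw [sum_comm]
  refine sum_congr rfl fun i _ => ?_
  rw [sum_comm]
  simp only [← mul_sum, sum_pairNormPartial_mul_self hy]

end PairNorm

theorem mlObjective_eq_pairNormSum {n L : ℕ} (A : Fin n → Fin n → Fin L → Fin L → ℝ)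
    (α β : ℝ) (x : Fin n → ℝ) (c : Fin L → ℝ) :
    mlObjective A α β x c =
      pairNormSum α (fun i j => ∑ k, ∑ l, A i j k l * (c k ^ β + c l ^ β) ^ (1 / β)) x := by
  simp only [mlObjective, pairNormSum, sum_mul]
  exact sum_congr rfl fun i _ => sum_congr rfl fun j _ => sum_congr rfl fun k _ =>
    sum_congr rfl fun l _ => mul_right_comm _ _ _

theorem partialX_eq_pairNormSum {n L : ℕ} (A : Fin n → Fin n → Fin L → Fin L → ℝ)
    {α : ℝ} (hα : α ≠ 0) (β : ℝ) (m : Fin n) {x : Fin n → ℝ} (hx : ∀ i, 0 < x i)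
    (c : Fin L → ℝ) :
    partialX A α β m x c =
      pairNormSum β (fun k l => ∑ i, ∑ j, A i j k l * pairNormPartial α x m i j) c := by
  rw [partialX, funext fun t => mlObjective_eq_pairNormSum A α β (update x m t) c,
    (hasDerivAt_pairNormSum_update hα _ hx m).deriv]
  simp only [pairNormSum, sum_mul]
  simp_rw [sum_comm (γ := Fin n) (α := Fin L)]
  exact sum_congr rfl fun k _ => sum_congr rfl fun l _ => sum_congr rfl fun i _ =>
    sum_congr rfl fun j _ => mul_right_comm _ _ _

theorem second_partial_cx_bound_general {n L : ℕ}
    (A : Fin n → Fin n → Fin L → Fin L → ℝ) (hA : ∀ i j k l, 0 ≤ A i j k l)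
    (α β : ℝ) (hα : 1 < α) (hβ : 1 < β)
    (x : Fin n → ℝ) (c : Fin L → ℝ) (hx : ∀ i, 0 < x i) (hc : ∀ k, 0 < c k) :
    ∀ m : Fin n,
      |∑ p, deriv (fun t => partialX A α β m x (Function.update c p t)) (c p) * c p| ≤
        2 * partialX A α β m x c := by
  intro m
  have hpartialX := partialX_eq_pairNormSum A (by linarith : α ≠ 0) β m hx
  have hEuler : ∑ p, deriv (fun t => partialX A α β m x (update c p t)) (c p) * c p =
      partialX A α β m x c := by
    simp only [hpartialX]
    exact sum_deriv_pairNormSum_update_mul (by linarith) _ hc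
  have hnonneg : 0 ≤ partialX A α β m x c := by
    rw [hpartialX]
    exact pairNormSum_nonneg (fun k l => sum_nonneg fun i _ => sum_nonneg fun j _ =>
      mul_nonneg (hA i j k l) (pairNormPartial_nonneg (fun i => (hx i).le) m i j))
      fun k => (hc k).le
  rw [hEuler, abs_of_nonneg hnonneg]
  linarith

theorem second_partial_cx_bound {n L : ℕ} (hn : 1 ≤ n) (hL : 1 ≤ L)
    (A : Fin n → Fin n → Fin L → Fin L → ℝ) (hA : ∀ i j k l, 0 ≤ A i j k l)
    (α β : ℝ) (hα : 1 < α) (hβ : 1 < β)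
    (x : Fin n → ℝ) (c : Fin L → ℝ) (hx : ∀ i, 0 < x i) (hc : ∀ k, 0 < c k) :
    ∀ m : Fin n,
      |∑ p, deriv (fun t => partialX A α β m x (Function.update c p t)) (c p) * c p| ≤
        2 * partialX A α β m x c :=
  second_partial_cx_bound_general A hA α β hα hβ x c hx hc
end

section
/- Let n, L ≥ 1, let A ∈ ℝ^{n×n×L×L} be a nonnegative tensor, let α, β > 1, and let x ∈ ℝ^n, c ∈ ℝ^L be entrywise positive. Then for every index p, |Σ_{i=1}^n (∂²f_{α,β}/∂x_i ∂c_p)(x,c) · x_i| ≤ 2 · (∂f_{α,β}/∂c_p)(x,c). -/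
/-!
For fixed `c`, the derivative `∂f/∂c_p` is a combination, with nonnegative weights, of the
functions `x ↦ (x_i ^ α + x_j ^ α) ^ (1 / α)`. It is therefore nonnegative and positively
homogeneous of degree one in `x`, and Euler's identity for homogeneous functions shows that
`∑ i, ∂²f/∂x_i∂c_p · x_i` is `∂f/∂c_p` itself, so its absolute value is
`∂f/∂c_p`.
-/

open Finset Function

/-- The partial derivative `∂f/∂c_p` of the objective with respect to layer coreness. -/
noncomputable def partialC {n L : ℕ} (A : Fin n → Fin n → Fin L → Fin L → ℝ)
    (α β : ℝ) (p : Fin L) (x : Fin n → ℝ) (c : Fin L → ℝ) : ℝ :=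
  deriv (fun t => mlObjective A α β x (Function.update c p t)) (c p)

noncomputable def pairNorm (γ a b : ℝ) : ℝ := (a ^ γ + b ^ γ) ^ (1 / γ)

section pairNorm

variable {γ : ℝ}

theorem pairNorm_nonneg {a b : ℝ} (ha : 0 ≤ a) (hb : 0 ≤ b) : 0 ≤ pairNorm γ a b := by
  unfold pairNorm; positivity

theorem pairNorm_mul (hγ : γ ≠ 0) {s a b : ℝ} (hs : 0 ≤ s) (ha : 0 ≤ a) (hb : 0 ≤ b) :
    pairNorm γ (s * a) (s * b) = s * pairNorm γ a b := by
  unfold pairNorm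
  rw [Real.mul_rpow hs ha, Real.mul_rpow hs hb, ← mul_add,
    Real.mul_rpow (by positivity) (by positivity), ← Real.rpow_mul hs, mul_one_div_cancel hγ,
    Real.rpow_one]

theorem HasDerivAt.pairNorm (hγ : γ ≠ 0) {u v : ℝ → ℝ} {u' v' t : ℝ} (hu : HasDerivAt u u' t)
    (hv : HasDerivAt v v' t) (hu0 : 0 < u t) (hv0 : 0 < v t) :
    HasDerivAt (fun s => pairNorm γ (u s) (v s))
      ((u t ^ γ + v t ^ γ) ^ (1 / γ - 1) * (u t ^ (γ - 1) * u' + v t ^ (γ - 1) * v')) t := by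
  have hS : u t ^ γ + v t ^ γ ≠ 0 := by positivity
  convert ((hu.rpow_const (Or.inl hu0.ne')).fun_add (hv.rpow_const (Or.inl hv0.ne'))).rpow_const
    (p := 1 / γ) (Or.inl hS) using 1
  · rfl
  · field_simp

theorem differentiableAt_pairNorm_apply {ι : Type*} [Fintype ι] {x : ι → ℝ} (hx : ∀ i, 0 < x i)
    (i j : ι) :
    DifferentiableAt ℝ (fun y : ι → ℝ => pairNorm γ (y i) (y j)) x := by
  unfold pairNorm
  have hS : x i ^ γ + x j ^ γ ≠ 0 := by have := hx i; have := hx j; positivity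
  have hi := (differentiableAt_apply (𝕜 := ℝ) i x).rpow_const (p := γ) (Or.inl (hx i).ne')
  have hj := (differentiableAt_apply (𝕜 := ℝ) j x).rpow_const (p := γ) (Or.inl (hx j).ne')
  exact (hi.add hj).rpow_const (Or.inl hS)

end pairNorm

theorem sum_deriv_update_mul_eq_of_homogeneous {ι : Type*} [Fintype ι] [DecidableEq ι]
    {g : (ι → ℝ) → ℝ} {x : ι → ℝ} (hg : DifferentiableAt ℝ g x)
    (hhom : ∀ s > 0, g (s • x) = s * g x) :
    ∑ i, deriv (fun t => g (update x i t)) (x i) * x i = g x := by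
  set L := fderiv ℝ g x
  have hpartial (i : ι) : deriv (fun t => g (update x i t)) (x i) = L (Pi.single i 1) := by
    have hg' : HasFDerivAt g L (update x i (x i)) := by
      rw [update_eq_self]; exact hg.hasFDerivAt
    exact (hg'.comp_hasDerivAt (x i) (hasDerivAt_update x i (x i))).deriv
  have hray_chain : HasDerivAt (fun s : ℝ => g (s • x)) (L x) 1 := by
    have hg' : HasFDerivAt g L ((1 : ℝ) • x) := by rw [one_smul]; exact hg.hasFDerivAt
    have hline : HasDerivAt (fun s : ℝ => s • x) x 1 := by
      simpa using (hasDerivAt_id (1 : ℝ)).smul_const x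
    exact hg'.comp_hasDerivAt (1 : ℝ) hline
  have hray_hom : HasDerivAt (fun s : ℝ => g (s • x)) (g x) 1 := by
    refine (hasDerivAt_mul_const (g x)).congr_of_eventuallyEq ?_
    filter_upwards [lt_mem_nhds one_pos] with s hs using hhom s hs
  calc ∑ i, deriv (fun t => g (update x i t)) (x i) * x i
      = L (∑ i, x i • Pi.single i 1) := by simp [hpartial, mul_comm]
    _ = L x := by congr 1; ext j; simp [Pi.single_apply]
    _ = g x := hray_chain.unique hray_hom

section

variable {n L : ℕ} (A : Fin n → Fin n → Fin L → Fin L → ℝ) (β : ℝ) (p : Fin L) (c : Fin L → ℝ)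

noncomputable def layerWeight (i j : Fin n) : ℝ :=
  ∑ k, ∑ l, A i j k l * deriv (fun t => pairNorm β (update c p t k) (update c p t l)) (c p)

variable {A β c}

theorem hasDerivAt_pairNorm_update_s5 (hβ : β ≠ 0) (hc : ∀ k, 0 < c k) (k l : Fin L) :
    HasDerivAt (fun t => pairNorm β (update c p t k) (update c p t l))
      ((c k ^ β + c l ^ β) ^ (1 / β - 1) * (c k ^ (β - 1) * (Pi.single p 1 : Fin L → ℝ) k +
        c l ^ (β - 1) * (Pi.single p 1 : Fin L → ℝ) l)) (c p) := by
  have hupd (m : Fin L) :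
      HasDerivAt (fun t => update c p t m) ((Pi.single p 1 : Fin L → ℝ) m) (c p) :=
    hasDerivAt_pi.mp (hasDerivAt_update c p (c p)) m
  simpa using (hupd k).pairNorm hβ (hupd l) (by simpa using hc k) (by simpa using hc l)

theorem layerWeight_nonneg (hA : ∀ i j k l, 0 ≤ A i j k l) (hβ : β ≠ 0) (hc : ∀ k, 0 < c k)
    (i j : Fin n) : 0 ≤ layerWeight A β p c i j := by
  refine sum_nonneg fun k _ => sum_nonneg fun l _ => mul_nonneg (hA i j k l) ?_
  rw [(hasDerivAt_pairNorm_update_s5 p hβ hc k l).deriv]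
  have hsingle : 0 ≤ (Pi.single p 1 : Fin L → ℝ) := Pi.single_nonneg.2 zero_le_one
  have := hc k; have := hc l
  exact mul_nonneg (by positivity) (add_nonneg (mul_nonneg (by positivity) (hsingle k))
    (mul_nonneg (by positivity) (hsingle l)))

theorem partialC_eq_sum_layerWeight_mul (α : ℝ) (hβ : β ≠ 0) (hc : ∀ k, 0 < c k)
    (y : Fin n → ℝ) :
    partialC A α β p y c = ∑ i, ∑ j, layerWeight A β p c i j * pairNorm α (y i) (y j) := by
  have hkl (k l : Fin L) := (hasDerivAt_pairNorm_update_s5 p hβ hc k l).differentiableAt.hasDerivAt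
  -- `mlObjective` unfolds to a sum of `A i j k l * pairNorm α _ _ * pairNorm β _ _`.
  have H : HasDerivAt (fun t => mlObjective A α β y (update c p t))
      (∑ i, ∑ j, ∑ k, ∑ l, A i j k l * pairNorm α (y i) (y j) *
        deriv (fun t => pairNorm β (update c p t k) (update c p t l)) (c p)) (c p) :=
    HasDerivAt.fun_sum fun i _ => HasDerivAt.fun_sum fun j _ =>
      HasDerivAt.fun_sum fun k _ => HasDerivAt.fun_sum fun l _ => (hkl k l).const_mul _
  simp only [partialC, H.deriv, layerWeight, sum_mul, mul_right_comm _ (pairNorm α _ _)]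

theorem partialC_nonneg (hA : ∀ i j k l, 0 ≤ A i j k l) (α : ℝ) (hβ : β ≠ 0)
    (hc : ∀ k, 0 < c k) {x : Fin n → ℝ} (hx : ∀ i, 0 < x i) : 0 ≤ partialC A α β p x c := by
  rw [partialC_eq_sum_layerWeight_mul p α hβ hc]
  exact sum_nonneg fun i _ => sum_nonneg fun j _ =>
    mul_nonneg (layerWeight_nonneg p hA hβ hc i j) (pairNorm_nonneg (hx i).le (hx j).le)

theorem partialC_smul {α : ℝ} (hα : α ≠ 0) (hβ : β ≠ 0) (hc : ∀ k, 0 < c k)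
    {x : Fin n → ℝ} (hx : ∀ i, 0 < x i) {s : ℝ} (hs : 0 < s) :
    partialC A α β p (s • x) c = s * partialC A α β p x c := by
  simp only [partialC_eq_sum_layerWeight_mul p α hβ hc, mul_sum, Pi.smul_apply, smul_eq_mul,
    pairNorm_mul hα hs.le (hx _).le (hx _).le, mul_left_comm s]

theorem differentiableAt_partialC (α : ℝ) (hβ : β ≠ 0) (hc : ∀ k, 0 < c k)
    {x : Fin n → ℝ} (hx : ∀ i, 0 < x i) :
    DifferentiableAt ℝ (fun y => partialC A α β p y c) x := by
  simp only [partialC_eq_sum_layerWeight_mul p α hβ hc]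
  exact DifferentiableAt.fun_sum fun i _ => DifferentiableAt.fun_sum fun j _ =>
    (differentiableAt_pairNorm_apply hx i j).const_mul _

end

theorem second_partial_xc_bound_general {n L : ℕ}
    (A : Fin n → Fin n → Fin L → Fin L → ℝ) (hA : ∀ i j k l, 0 ≤ A i j k l)
    (α β : ℝ) (hα : 1 < α) (hβ : 1 < β)
    (x : Fin n → ℝ) (c : Fin L → ℝ) (hx : ∀ i, 0 < x i) (hc : ∀ k, 0 < c k) :
    ∀ p : Fin L,
      |∑ i, deriv (fun t => partialC A α β p (Function.update x i t) c) (x i) * x i| ≤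
        2 * partialC A α β p x c := by
  intro p
  have hα0 : α ≠ 0 := (zero_lt_one.trans hα).ne'
  have hβ0 : β ≠ 0 := (zero_lt_one.trans hβ).ne'
  have hnonneg := partialC_nonneg p hA α hβ0 hc hx
  rw [sum_deriv_update_mul_eq_of_homogeneous (differentiableAt_partialC p α hβ0 hc hx)
    fun s hs => partialC_smul p hα0 hβ0 hc hx hs, abs_of_nonneg hnonneg]
  linarith

theorem second_partial_xc_bound {n L : ℕ} (hn : 1 ≤ n) (hL : 1 ≤ L)
    (A : Fin n → Fin n → Fin L → Fin L → ℝ) (hA : ∀ i j k l, 0 ≤ A i j k l)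
    (α β : ℝ) (hα : 1 < α) (hβ : 1 < β)
    (x : Fin n → ℝ) (c : Fin L → ℝ) (hx : ∀ i, 0 < x i) (hc : ∀ k, 0 < c k) :
    ∀ p : Fin L,
      |∑ i, deriv (fun t => partialC A α β p (Function.update x i t) c) (x i) * x i| ≤
        2 * partialC A α β p x c :=
  second_partial_xc_bound_general A hA α β hα hβ x c hx hc
end

section
/- Let n, L ≥ 1, let A ∈ ℝ^{n×n×L×L} be a nonnegative tensor such that for every node index m there exist indices j, k, l with A_{mj}^{kl} + A_{jm}^{kl} > 0, and let α, β > 1. Then for all entrywise positive x ∈ ℝ^n, c ∈ ℝ^L and every index m, (∂f_{α,β}/∂x_m)(x,c) > 0; that is, the gradient of f_{α,β} with respect to x is entrywise positive. -/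
open Finset Function

/-!
Each summand of `f` depends on `x_m` only through the power mean `(x_i^α + x_j^α)^(1/α)`, whose
`x_m`-derivative `(x_i^(α-1) δ_im + x_j^(α-1) δ_jm) (x_i^α + x_j^α)^(1/α-1)` is nonnegative, and
positive when `i = m` or `j = m`. So `∂f/∂x_m` is a sum of nonnegative terms, and the hypothesis
on `A` supplies a positive one.
-/
theorem sum_sum_sum_sum_pos {ι κ μ ν : Type*} [Fintype ι] [Fintype κ] [Fintype μ] [Fintype ν]
    {T : ι → κ → μ → ν → ℝ} (hT : ∀ i j k l, 0 ≤ T i j k l) (h : ∃ i j k l, 0 < T i j k l) :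
    0 < ∑ i, ∑ j, ∑ k, ∑ l, T i j k l := by
  obtain ⟨i, j, k, l, hpos⟩ := h
  refine sum_pos' (fun _ _ => sum_nonneg fun _ _ => sum_nonneg fun _ _ => sum_nonneg
    fun _ _ => hT _ _ _ _) ⟨i, mem_univ _, ?_⟩
  refine sum_pos' (fun _ _ => sum_nonneg fun _ _ => sum_nonneg fun _ _ => hT _ _ _ _)
    ⟨j, mem_univ _, ?_⟩
  refine sum_pos' (fun _ _ => sum_nonneg fun _ _ => hT _ _ _ _) ⟨k, mem_univ _, ?_⟩
  exact sum_pos' (fun _ _ => hT _ _ _ _) ⟨l, mem_univ _, hpos⟩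

theorem HasDerivAt.rpow_add_rpow_rpow_inv {u v : ℝ → ℝ} {u' v' t α : ℝ} (hα : α ≠ 0)
    (hu : HasDerivAt u u' t) (hv : HasDerivAt v v' t) (hut : 0 < u t) (hvt : 0 < v t) :
    HasDerivAt (fun s => (u s ^ α + v s ^ α) ^ (1 / α))
      ((u t ^ (α - 1) * u' + v t ^ (α - 1) * v') * (u t ^ α + v t ^ α) ^ (1 / α - 1)) t := by
  have hsum : 0 < u t ^ α + v t ^ α := by positivity
  convert ((hu.rpow_const (p := α) (Or.inl hut.ne')).fun_add
    (hv.rpow_const (p := α) (Or.inl hvt.ne'))).rpow_const (p := 1 / α) (Or.inl hsum.ne') using 1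
  field_simp

theorem hasDerivAt_update_apply {ι : Type*} [Fintype ι] [DecidableEq ι] (x : ι → ℝ) (m i : ι)
    (t : ℝ) : HasDerivAt (fun s => update x m s i) ((Pi.single m 1 : ι → ℝ) i) t :=
  hasDerivAt_pi.1 (hasDerivAt_update x m t) i

section PowerMeanPartial

variable {ι : Type*} [DecidableEq ι]

noncomputable def powerMeanPartial (α : ℝ) (x : ι → ℝ) (m i j : ι) : ℝ :=
  (x i ^ (α - 1) * (Pi.single m 1 : ι → ℝ) i + x j ^ (α - 1) * (Pi.single m 1 : ι → ℝ) j) *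
    (x i ^ α + x j ^ α) ^ (1 / α - 1)

theorem powerMeanPartial_nonneg {α : ℝ} {x : ι → ℝ} (hx : ∀ i, 0 < x i) (m i j : ι) :
    0 ≤ powerMeanPartial α x m i j := by
  have := hx i; have := hx j
  unfold powerMeanPartial
  simp only [Pi.single_apply]
  positivity

theorem powerMeanPartial_pos {α : ℝ} {x : ι → ℝ} (hx : ∀ i, 0 < x i) {m i j : ι}
    (h : i = m ∨ j = m) : 0 < powerMeanPartial α x m i j := by
  have := hx i; have := hx j
  unfold powerMeanPartial
  refine mul_pos ?_ (by positivity)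
  rcases h with rfl | rfl <;> simp only [Pi.single_apply] <;> split_ifs <;> positivity

end PowerMeanPartial

theorem hasDerivAt_mlObjective_update {n L : ℕ} (A : Fin n → Fin n → Fin L → Fin L → ℝ)
    {α : ℝ} (β : ℝ) (hα : α ≠ 0) {x : Fin n → ℝ} (hx : ∀ i, 0 < x i) (c : Fin L → ℝ)
    (m : Fin n) :
    HasDerivAt (fun t => mlObjective A α β (update x m t) c)
      (∑ i, ∑ j, ∑ k, ∑ l,
        A i j k l * powerMeanPartial α x m i j * (c k ^ β + c l ^ β) ^ (1 / β)) (x m) := by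
  have hu : ∀ i, 0 < update x m (x m) i := by simpa only [update_eq_self] using hx
  refine HasDerivAt.fun_sum fun i _ => HasDerivAt.fun_sum fun j _ =>
    HasDerivAt.fun_sum fun k _ => HasDerivAt.fun_sum fun l _ => ?_
  have hij := (hasDerivAt_update_apply x m i (x m)).rpow_add_rpow_rpow_inv hα
    (hasDerivAt_update_apply x m j (x m)) (hu i) (hu j)
  simp only [update_eq_self] at hij
  exact (hij.const_mul _).mul_const _

theorem gradient_x_pos_general {n L : ℕ}
    (A : Fin n → Fin n → Fin L → Fin L → ℝ) (hA : ∀ i j k l, 0 ≤ A i j k l)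
    (hAx : ∀ m : Fin n, ∃ j k l, 0 < A m j k l + A j m k l)
    (α β : ℝ) (hα : 1 < α) :
    ∀ (x : Fin n → ℝ) (c : Fin L → ℝ), (∀ i, 0 < x i) → (∀ k, 0 < c k) →
      ∀ m : Fin n, 0 < partialX A α β m x c := by
  intro x c hx hc m
  have hw : ∀ k l, 0 < (c k ^ β + c l ^ β) ^ (1 / β) := fun k l => by
    have := hc k; have := hc l; positivity
  rw [partialX, (hasDerivAt_mlObjective_update A β (zero_lt_one.trans hα).ne' hx c m).deriv]
  refine sum_sum_sum_sum_pos (fun i j k l => ?_) ?_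
  · exact mul_nonneg (mul_nonneg (hA i j k l) (powerMeanPartial_nonneg hx m i j)) (hw k l).le
  obtain ⟨j, k, l, hjkl⟩ := hAx m
  obtain h | h : 0 < A m j k l ∨ 0 < A j m k l := by
    by_contra! h
    linarith [h.1, h.2]
  · exact ⟨m, j, k, l, mul_pos (mul_pos h (powerMeanPartial_pos hx (Or.inl rfl))) (hw k l)⟩
  · exact ⟨j, m, k, l, mul_pos (mul_pos h (powerMeanPartial_pos hx (Or.inr rfl))) (hw k l)⟩

theorem gradient_x_pos {n L : ℕ} (hn : 1 ≤ n) (hL : 1 ≤ L)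
    (A : Fin n → Fin n → Fin L → Fin L → ℝ) (hA : ∀ i j k l, 0 ≤ A i j k l)
    (hAx : ∀ m : Fin n, ∃ j k l, 0 < A m j k l + A j m k l)
    (α β : ℝ) (hα : 1 < α) (hβ : 1 < β) :
    ∀ (x : Fin n → ℝ) (c : Fin L → ℝ), (∀ i, 0 < x i) → (∀ k, 0 < c k) →
      ∀ m : Fin n, 0 < partialX A α β m x c :=
  gradient_x_pos_general A hA hAx α β hα
end

section
/- Let n ≥ 1, let B ∈ ℝ^{n×n} be a real matrix, set n_1 = Σ_{i,j=1}^n B_{ij} and n_2 = n² − n_1, and assume n_1 ≠ 0 and n_2 ≠ 0. Let x̄ ∈ {0,1}^n be a binary vector. Then the QUBO objective admits an exact quadratic-form representation: Σ_{i,j=1}^n [ (B_{ij}/n_1)·max{x̄_i, x̄_j} + ((1−B_{ij})/n_2)·(1 − max{x̄_i, x̄_j}) ] = x̄ᵀ Q x̄ + 1, where Q = (1/n_1 + 1/n_2)·diag(B·𝟙 + Bᵀ·𝟙) − (2n/n_2)·I_n − (1/n_1 + 1/n_2)·B + (1/n_2)·𝟙𝟙ᵀ, with 𝟙 ∈ ℝ^n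 the all-ones vector, I_n the identity matrix, and diag(v) the diagonal matrix with diagonal v. -/
/-! For binary `x` one has `max x_i x_j = x_i + x_j - x_i x_j` and `x_i² = x_i`, so
`∑ F_ij max x_i x_j` is the quadratic form of `diag(F𝟙 + Fᵀ𝟙) - F` at `x`. Applying this to `B`
and to `𝟙𝟙ᵀ - B`, whose total weight is `n₂`, expresses the objective as a quadratic form plus
`n₂ / n₂ = 1`. -/

open Finset Matrix

section BinaryQuadraticForm

variable {R ι : Type*} [CommRing R] [Fintype ι]

lemma max_eq_add_sub_mul_of_binary [LinearOrder R] [IsOrderedRing R] {a b : R}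
    (ha : a = 0 ∨ a = 1) (hb : b = 0 ∨ b = 1) : max a b = a + b - a * b := by
  rcases ha with rfl | rfl <;> rcases hb with rfl | rfl <;> simp

lemma sum_sum_mul_mul_eq_dotProduct_mulVec (M : Matrix ι ι R) (x : ι → R) :
    ∑ i, ∑ j, x i * M i j * x j = x ⬝ᵥ M *ᵥ x := by
  simp only [dotProduct, mulVec, mul_sum, mul_assoc]

variable [DecidableEq ι]

lemma dotProduct_diagonal_mulVec_of_binary (d : ι → R) {x : ι → R}
    (hx : ∀ i, x i = 0 ∨ x i = 1) : x ⬝ᵥ diagonal d *ᵥ x = ∑ i, d i * x i := by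
  refine sum_congr rfl fun i _ => ?_
  rcases hx i with h | h <;> simp [mulVec_diagonal, h]

lemma sum_sum_mul_max_eq_dotProduct_mulVec [LinearOrder R] [IsOrderedRing R]
    (F : Matrix ι ι R) {x : ι → R} (hx : ∀ i, x i = 0 ∨ x i = 1) :
    ∑ i, ∑ j, F i j * max (x i) (x j) =
      x ⬝ᵥ (diagonal (fun i => ∑ j, F i j + ∑ j, F j i) - F) *ᵥ x := by
  rw [sub_mulVec, dotProduct_sub, dotProduct_diagonal_mulVec_of_binary _ hx,
    ← sum_sum_mul_mul_eq_dotProduct_mulVec]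
  simp only [max_eq_add_sub_mul_of_binary (hx _) (hx _), mul_sub, mul_add, sum_sub_distrib,
    sum_add_distrib, add_mul, sum_mul]
  rw [sum_comm (f := fun i j => F i j * x j)]
  congr 1
  exact sum_congr rfl fun _ _ => sum_congr rfl fun _ _ => by ring

end BinaryQuadraticForm

lemma diagonal_rowSum_add_colSum_ones_sub {n : ℕ} (B : Matrix (Fin n) (Fin n) ℝ) :
    diagonal (fun i => ∑ j, (of (fun _ _ : Fin n => (1 : ℝ)) - B) i j +
        ∑ j, (of (fun _ _ : Fin n => (1 : ℝ)) - B) j i) =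
      (2 * (n : ℝ)) • (1 : Matrix (Fin n) (Fin n) ℝ) -
        diagonal (fun i => ∑ j, B i j + ∑ j, B j i) := by
  ext i j
  rcases eq_or_ne i j with rfl | h
  · simp only [Matrix.sub_apply, of_apply, sum_sub_distrib, sum_const, card_univ, Fintype.card_fin,
      nsmul_eq_mul, mul_one, diagonal_apply_eq, Matrix.smul_apply, one_apply_eq, smul_eq_mul]
    ring
  · simp [h]

theorem qubo_quadratic_form_general {n : ℕ} (B : Matrix (Fin n) (Fin n) ℝ)
    (n1 n2 : ℝ) (hn1def : n1 = ∑ i, ∑ j, B i j) (hn2def : n2 = (n : ℝ) ^ 2 - n1)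
    (hn2 : n2 ≠ 0)
    (xbar : Fin n → ℝ) (hxbar : ∀ i, xbar i = 0 ∨ xbar i = 1) :
    ∑ i, ∑ j,
        (B i j / n1 * max (xbar i) (xbar j) +
          (1 - B i j) / n2 * (1 - max (xbar i) (xbar j))) =
      (∑ i, ∑ j, xbar i *
        ((1 / n1 + 1 / n2) • Matrix.diagonal (fun i => (∑ j, B i j) + (∑ j, B j i))
          - (2 * (n : ℝ) / n2) • (1 : Matrix (Fin n) (Fin n) ℝ)
          - (1 / n1 + 1 / n2) • B
          + (1 / n2) • Matrix.of (fun _ _ : Fin n => (1 : ℝ))) i j * xbar j) + 1 := by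
  set J := of fun _ _ : Fin n => (1 : ℝ)
  have hmaxB := sum_sum_mul_max_eq_dotProduct_mulVec B hxbar
  have hmaxC := sum_sum_mul_max_eq_dotProduct_mulVec (J - B) hxbar
  rw [diagonal_rowSum_add_colSum_ones_sub] at hmaxC
  have hcomplement : ∑ i, ∑ j, (J - B) i j = n2 := by
    simp [J, sum_sub_distrib, hn1def, hn2def, sq]
  have hsplit : ∑ i, ∑ j, (B i j / n1 * max (xbar i) (xbar j) +
        (1 - B i j) / n2 * (1 - max (xbar i) (xbar j))) =
      1 / n1 * ∑ i, ∑ j, B i j * max (xbar i) (xbar j) +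
        1 / n2 * (∑ i, ∑ j, (J - B) i j - ∑ i, ∑ j, (J - B) i j * max (xbar i) (xbar j)) := by
    simp only [mul_sum, ← sum_sub_distrib, ← sum_add_distrib]
    exact sum_congr rfl fun _ _ => sum_congr rfl fun _ _ => by
      simp only [J, Matrix.sub_apply, of_apply]; ring
  rw [hsplit, hmaxB, hmaxC, hcomplement, sum_sum_mul_mul_eq_dotProduct_mulVec]
  simp only [add_mulVec, sub_mulVec, smul_mulVec, dotProduct_add, dotProduct_sub, dotProduct_smul,
    smul_eq_mul]
  field_simp
  ring

theorem qubo_quadratic_form {n : ℕ} (hn : 1 ≤ n) (B : Matrix (Fin n) (Fin n) ℝ)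
    (n1 n2 : ℝ) (hn1def : n1 = ∑ i, ∑ j, B i j) (hn2def : n2 = (n : ℝ) ^ 2 - n1)
    (hn1 : n1 ≠ 0) (hn2 : n2 ≠ 0)
    (xbar : Fin n → ℝ) (hxbar : ∀ i, xbar i = 0 ∨ xbar i = 1) :
    ∑ i, ∑ j,
        (B i j / n1 * max (xbar i) (xbar j) +
          (1 - B i j) / n2 * (1 - max (xbar i) (xbar j))) =
      (∑ i, ∑ j, xbar i *
        ((1 / n1 + 1 / n2) • Matrix.diagonal (fun i => (∑ j, B i j) + (∑ j, B j i))
          - (2 * (n : ℝ) / n2) • (1 : Matrix (Fin n) (Fin n) ℝ)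
          - (1 / n1 + 1 / n2) • B
          + (1 / n2) • Matrix.of (fun _ _ : Fin n => (1 : ℝ))) i j * xbar j) + 1 :=
  qubo_quadratic_form_general B n1 n2 hn1def hn2def hn2 xbar hxbar
end
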